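/- Let P_{j'}(x₁,v₁) = Σ_{j≤j'} ∫ D_j(x₁,y₁) b₁(y₁) D^N_j(y₁,v₁) dy₁ where D^N_j = Σ_{|ℓ|≤N} D_{j+ℓ}. Then for |x₁−v₁| ≤ 2^{−j'}, |P_{j'}(x₁,v₁)| ≤ C 2^{j'n}/(1+2^{j'}|x₁−v₁|)^{n+ε}. -/

import Mathlib

open MeasureTheory

noncomputable abbrev E (n : ℕ) := EuclideanSpace ℝ (Fin n)

def IsApproxId (n : ℕ) (Ca ε : ℝ) (b : E n → ℂ) (S : ℤ → E n → E n → ℂ) : Prop :=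
  (∀ j : ℤ, Measurable (Function.uncurry (S j))) ∧
  (∀ (j : ℤ) (x y : E n), ‖S j x y‖ ≤ Ca * (2:ℝ) ^ ((j:ℝ) * n)) ∧
  (∀ (j : ℤ) (x y : E n), Ca * (2:ℝ) ^ (-(j:ℝ)) ≤ ‖x - y‖ → S j x y = 0) ∧
  (∀ (j : ℤ) (x x' y : E n),
      ‖S j x y - S j x' y‖ ≤ Ca * (2:ℝ) ^ ((j:ℝ) * ((n:ℝ) + ε)) * ‖x - x'‖ ^ ε) ∧
  (∀ (j : ℤ) (x y y' : E n),
      ‖S j x y - S j x y'‖ ≤ Ca * (2:ℝ) ^ ((j:ℝ) * ((n:ℝ) + ε)) * ‖y - y'‖ ^ ε) ∧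
  (∀ (j : ℤ) (x x' y y' : E n), ‖S j x y - S j x y' - (S j x' y - S j x' y')‖ ≤
      Ca * (2:ℝ) ^ ((j:ℝ) * ((n:ℝ) + 2*ε)) * ‖x - x'‖ ^ ε * ‖y - y'‖ ^ ε) ∧
  (∀ (j : ℤ) (x : E n), (∫ y, S j x y * b y) = 1) ∧
  (∀ (j : ℤ) (y : E n), (∫ x, S j x y * b x) = 1)

/-! Each term of the series is `O(2^{jn})`: `D_j(x, ·) b₁` is supported in a ball of radius
comparable to `2^{-j}` and has size `2^{jn}`, while `D^N_j(·, v)` has size at most `2^{(j+N)n}`.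
Summing the geometric series over `j ≤ j'` gives `C 2^{j'n}`, and for `|x - v| ≤ 2^{-j'}` the
denominator `(1 + 2^{j'}|x - v|)^{n+ε}` is at most `2^{n+ε}`. In dimension `0` the series does
not decay, but there every term vanishes by the normalisation `∫ S_j(x, y) b₁(y) dy = 1`. -/

open Metric Module

theorem hasSum_ite_le_rpow_mul {a s : ℝ} (ha : 1 < a) (hs : 0 < s) (j' : ℤ) :
    HasSum (fun j : ℤ => if j ≤ j' then a ^ ((j : ℝ) * s) else 0)
      (a ^ ((j' : ℝ) * s) / (1 - a ^ (-s))) := by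
  have hinj : Function.Injective fun k : ℕ => j' - k := fun k l h => by simpa using h
  have hoff : ∀ j ∉ Set.range fun k : ℕ => j' - k,
      (if j ≤ j' then a ^ ((j : ℝ) * s) else 0) = 0 := fun j hj =>
    if_neg fun hle => hj ⟨(j' - j).toNat, by dsimp only; omega⟩
  have hr : a ^ (-s) < 1 := Real.rpow_lt_one_of_one_lt_of_neg ha (neg_neg_of_pos hs)
  rw [div_eq_mul_inv]
  refine (hinj.hasSum_iff hoff).mp
    (((hasSum_geometric_of_lt_one (by positivity) hr).mul_left _).congr_fun fun k => ?_)
  rw [Function.comp_apply, if_pos (by omega), ← Real.rpow_natCast,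
    ← Real.rpow_mul (by positivity), ← Real.rpow_add (by positivity)]
  push_cast; ring_nf

theorem norm_tsum_ite_le_of_norm_le_rpow_mul {G : Type*} [SeminormedAddCommGroup G]
    {a s K : ℝ} (ha : 1 < a) (hs : 0 < s) {f : ℤ → G} {j' : ℤ}
    (hf : ∀ j ≤ j', ‖f j‖ ≤ K * a ^ ((j : ℝ) * s)) :
    ‖∑' j, if j ≤ j' then f j else 0‖ ≤ K * (a ^ ((j' : ℝ) * s) / (1 - a ^ (-s))) := by
  refine tsum_of_norm_bounded ((hasSum_ite_le_rpow_mul ha hs j').mul_left K) fun j => ?_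
  split_ifs with hj
  · simpa only [mul_ite, mul_zero, if_pos hj] using hf j hj
  · simp

theorem integral_sub_mul_mul_eq_zero_of_unique {X 𝕜 : Type*} [MeasurableSpace X] [Unique X]
    [RCLike 𝕜] {μ : Measure X} {u w b g : X → 𝕜}
    (h : ∫ y, u y * b y ∂μ = ∫ y, w y * b y ∂μ) : ∫ y, (u y - w y) * b y * g y ∂μ = 0 := by
  simp only [integral_unique, RCLike.real_smul_eq_coe_mul] at h ⊢
  linear_combination g default * h

theorem norm_integral_le_of_norm_le_of_eq_zero_off_closedBall {X G : Type*}
    [NormedAddCommGroup X] [NormedSpace ℝ X] [MeasurableSpace X] [BorelSpace X]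
    [FiniteDimensional ℝ X] (μ : Measure X) [μ.IsAddHaarMeasure]
    [NormedAddCommGroup G] [NormedSpace ℝ G] {f : X → G} {x : X} {r A : ℝ} (hr : 0 ≤ r)
    (hA : ∀ y ∈ closedBall x r, ‖f y‖ ≤ A) (h0 : ∀ y ∉ closedBall x r, f y = 0) :
    ‖∫ y, f y ∂μ‖ ≤ A * (r ^ finrank ℝ X * μ.real (closedBall 0 1)) := by
  rw [← setIntegral_eq_integral_of_forall_compl_eq_zero h0, ← μ.addHaar_real_closedBall' x hr]
  exact norm_setIntegral_le_of_norm_le_const measure_closedBall_lt_top hA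

section KernelDifferences

variable {X F : Type*} [SeminormedAddCommGroup F] {S : ℤ → X → X → F} {Ca s : ℝ}

theorem norm_sub_pred_le (hCa : 0 ≤ Ca) (hs : 0 ≤ s)
    (hsize : ∀ j x y, ‖S j x y‖ ≤ Ca * (2:ℝ) ^ ((j:ℝ) * s)) (j : ℤ) (x y : X) :
    ‖S j x y - S (j-1) x y‖ ≤ 2 * Ca * (2:ℝ) ^ ((j:ℝ) * s) := by
  have hpred : Ca * (2:ℝ) ^ (((j - 1 : ℤ) : ℝ) * s) ≤ Ca * (2:ℝ) ^ ((j:ℝ) * s) := by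
    gcongr
    · exact one_le_two
    · nlinarith
  linarith [norm_sub_le (S j x y) (S (j-1) x y), hsize j x y, hsize (j-1) x y]

theorem sub_pred_eq_zero_of_le_norm [SeminormedAddCommGroup X] (hCa : 0 ≤ Ca)
    (hsupp : ∀ (j : ℤ) x y, Ca * (2:ℝ) ^ (-(j:ℝ)) ≤ ‖x - y‖ → S j x y = 0) {j : ℤ} {x y : X}
    (h : 2 * Ca * (2:ℝ) ^ (-(j:ℝ)) ≤ ‖x - y‖) : S j x y - S (j-1) x y = 0 := by
  have hpred : Ca * (2:ℝ) ^ (-((j - 1 : ℤ) : ℝ)) = 2 * Ca * (2:ℝ) ^ (-(j:ℝ)) := by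
    rw [Int.cast_sub, Int.cast_one, neg_sub, sub_eq_add_neg, Real.rpow_add two_pos,
      Real.rpow_one]
    ring
  have hj : Ca * (2:ℝ) ^ (-(j:ℝ)) ≤ 2 * Ca * (2:ℝ) ^ (-(j:ℝ)) := by
    nlinarith [Real.rpow_nonneg zero_le_two (-(j:ℝ))]
  rw [hsupp j x y (hj.trans h), hsupp (j-1) x y (hpred ▸ h), sub_zero]

theorem norm_sum_Icc_sub_pred_le (hCa : 0 ≤ Ca) (hs : 0 ≤ s)
    (hsize : ∀ j x y, ‖S j x y‖ ≤ Ca * (2:ℝ) ^ ((j:ℝ) * s)) (N : ℕ) (j : ℤ) (y v : X) :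
    ‖∑ l ∈ Finset.Icc (-(N:ℤ)) N, (S (j+l) y v - S (j+l-1) y v)‖ ≤
      (2 * N + 1) * (2 * Ca * (2:ℝ) ^ (((j:ℝ) + N) * s)) := by
  have hterm : ∀ l ∈ Finset.Icc (-(N:ℤ)) N,
      ‖S (j+l) y v - S (j+l-1) y v‖ ≤ 2 * Ca * (2:ℝ) ^ (((j:ℝ) + N) * s) := by
    intro l hl
    refine (norm_sub_pred_le hCa hs hsize (j+l) y v).trans ?_
    have hlN : (l:ℝ) ≤ N := by exact_mod_cast (Finset.mem_Icc.mp hl).2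
    gcongr
    · exact one_le_two
    · push_cast; linarith
  have hcard : ((Finset.Icc (-(N:ℤ)) N).card : ℝ) = 2 * N + 1 := by
    rw [Int.card_Icc, show (N:ℤ) + 1 - -(N:ℤ) = ((2 * N + 1 : ℕ) : ℤ) by push_cast; ring,
      Int.toNat_natCast]
    push_cast; ring
  calc _ ≤ ∑ l ∈ Finset.Icc (-(N:ℤ)) N, ‖S (j+l) y v - S (j+l-1) y v‖ := norm_sum_le _ _
    _ ≤ _ := Finset.sum_le_card_nsmul _ _ _ hterm
    _ = _ := by rw [nsmul_eq_mul, hcard]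

end KernelDifferences

theorem exists_norm_integral_sub_pred_mul_sum_le {n : ℕ} {Ca B : ℝ} {b : E n → ℂ}
    {S : ℤ → E n → E n → ℂ} (hCa : 0 ≤ Ca) (hb : ∀ y, ‖b y‖ ≤ B)
    (hsize : ∀ j x y, ‖S j x y‖ ≤ Ca * (2:ℝ) ^ ((j:ℝ) * n))
    (hsupp : ∀ (j : ℤ) x y, Ca * (2:ℝ) ^ (-(j:ℝ)) ≤ ‖x - y‖ → S j x y = 0) (N : ℕ) :
    ∃ K : ℝ, ∀ (j : ℤ) (x v : E n),
      ‖∫ y, (S j x y - S (j-1) x y) * b y *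
          ∑ l ∈ Finset.Icc (-(N:ℤ)) N, (S (j+l) y v - S (j+l-1) y v)‖ ≤
        K * (2:ℝ) ^ ((j:ℝ) * n) := by
  refine ⟨2 * Ca * B * ((2 * N + 1) * (2 * Ca * (2 ^ N) ^ n)) *
    ((2 * Ca) ^ n * (volume : Measure (E n)).real (closedBall 0 1)), fun j x v => ?_⟩
  have hB : 0 ≤ B := (norm_nonneg _).trans (hb 0)
  have hn : (0:ℝ) ≤ n := n.cast_nonneg
  have hbound := norm_integral_le_of_norm_le_of_eq_zero_off_closedBall (volume : Measure (E n))
    (f := fun y => (S j x y - S (j-1) x y) * b y *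
      ∑ l ∈ Finset.Icc (-(N:ℤ)) N, (S (j+l) y v - S (j+l-1) y v))
    (x := x) (r := 2 * Ca * (2:ℝ) ^ (-(j:ℝ)))
    (A := 2 * Ca * (2:ℝ) ^ ((j:ℝ) * n) * B *
      ((2 * N + 1) * (2 * Ca * (2:ℝ) ^ (((j:ℝ) + N) * n))))
    (by positivity)
    (fun y _ => by
      rw [norm_mul, norm_mul]
      gcongr
      · exact norm_sub_pred_le hCa hn hsize j x y
      · exact hb y
      · exact norm_sum_Icc_sub_pred_le hCa hn hsize N j y v)
    (fun y hy => by
      have hr : 2 * Ca * (2:ℝ) ^ (-(j:ℝ)) ≤ ‖x - y‖ := by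
        rw [norm_sub_rev, ← dist_eq_norm]
        exact (lt_of_not_ge (mt mem_closedBall.mpr hy)).le
      rw [sub_pred_eq_zero_of_le_norm hCa hsupp hr, zero_mul, zero_mul])
  refine hbound.trans_eq ?_
  rw [finrank_euclideanSpace_fin, Real.rpow_mul_natCast zero_le_two,
    Real.rpow_mul_natCast zero_le_two, Real.rpow_add two_pos, Real.rpow_neg zero_le_two,
    Real.rpow_natCast, mul_pow, mul_pow, inv_pow]
  have ht : ((2:ℝ) ^ (j:ℝ)) ^ n ≠ 0 := by positivity
  field_simp

theorem tb_product_Pj_poisson_bound_general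
    (n : ℕ) (ε : ℝ) (hε : 0 < ε)
    (b₁ : E n → ℂ) (B : ℝ) (hb₁ : ∀ x, ‖b₁ x‖ ≤ B)
    (Ca : ℝ) (hCa : 0 < Ca)
    (S : ℤ → E n → E n → ℂ) (hS : IsApproxId n Ca ε b₁ S) (N : ℕ) :
    ∃ C : ℝ, 0 < C ∧ ∀ (j' : ℤ) (x v : E n), ‖x - v‖ ≤ (2:ℝ) ^ (-(j':ℝ)) →
      ‖∑' j : ℤ, if j ≤ j' then
          (∫ y, (S j x y - S (j-1) x y) * b₁ y *
            (∑ l ∈ Finset.Icc (-(N:ℤ)) (N:ℤ),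
              (S (j+l) y v - S (j+l-1) y v)))
        else 0‖ ≤
        C * (2:ℝ) ^ ((j':ℝ) * n) / (1 + (2:ℝ) ^ ((j':ℝ)) * ‖x - v‖) ^ ((n:ℝ) + ε) := by
  obtain ⟨-, hsize, hsupp, -, -, -, hcanc, -⟩ := hS
  obtain ⟨K, hK⟩ := exists_norm_integral_sub_pred_mul_sum_le hCa.le hb₁ hsize hsupp N
  set C := max (K / (1 - (2:ℝ) ^ (-(n:ℝ)))) 1
  refine ⟨C * 2 ^ ((n:ℝ) + ε), by positivity, fun j' x v hxv => ?_⟩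
  have hscaled : (2:ℝ) ^ (j':ℝ) * ‖x - v‖ ≤ 1 := by
    calc (2:ℝ) ^ (j':ℝ) * ‖x - v‖ ≤ 2 ^ (j':ℝ) * 2 ^ (-(j':ℝ)) := by gcongr
      _ = 1 := by rw [← Real.rpow_add two_pos, add_neg_cancel, Real.rpow_zero]
  have hden : (1 + (2:ℝ) ^ (j':ℝ) * ‖x - v‖) ^ ((n:ℝ) + ε) ≤ 2 ^ ((n:ℝ) + ε) := by
    gcongr
    linarith
  rw [mul_right_comm, le_div_iff₀ (by positivity)]
  rcases n.eq_zero_or_pos with rfl | hn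
  · simp only [integral_sub_mul_mul_eq_zero_of_unique ((hcanc _ x).trans (hcanc _ x).symm),
      ite_self, tsum_zero, norm_zero, zero_mul]
    positivity
  · calc _ ≤ ‖_‖ * 2 ^ ((n:ℝ) + ε) := by gcongr
      _ ≤ K * ((2:ℝ) ^ ((j':ℝ) * n) / (1 - 2 ^ (-(n:ℝ)))) * 2 ^ ((n:ℝ) + ε) := by
          gcongr
          exact norm_tsum_ite_le_of_norm_le_rpow_mul one_lt_two (by exact_mod_cast hn)
            fun j _ => hK j x v
      _ ≤ C * 2 ^ ((j':ℝ) * n) * 2 ^ ((n:ℝ) + ε) := by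
          rw [mul_div_left_comm, mul_comm _ (K / _)]
          gcongr
          exact le_max_left _ _

/-- Estimate (3.2), first half: the kernel
`P_{j'}(x,v) = Σ_{j ≤ j'} ∫ D_j(x,y) b₁(y) D^N_j(y,v) dy` satisfies
`|P_{j'}(x,v)| ≤ C 2^{j'n}/(1+2^{j'}|x-v|)^{n+ε}` whenever `|x-v| ≤ 2^{-j'}`. -/
theorem tb_product_Pj_poisson_bound
    (n : ℕ) (ε : ℝ) (hε : 0 < ε) (hε1 : ε ≤ 1)
    (b₁ : E n → ℂ) (B : ℝ) (hb₁m : Measurable b₁) (hb₁ : ∀ x, ‖b₁ x‖ ≤ B)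
    (Ca : ℝ) (hCa : 0 < Ca)
    (S : ℤ → E n → E n → ℂ) (hS : IsApproxId n Ca ε b₁ S) (N : ℕ) :
    ∃ C : ℝ, 0 < C ∧ ∀ (j' : ℤ) (x v : E n), ‖x - v‖ ≤ (2:ℝ) ^ (-(j':ℝ)) →
      ‖∑' j : ℤ, if j ≤ j' then
          (∫ y, (S j x y - S (j-1) x y) * b₁ y *
            (∑ l ∈ Finset.Icc (-(N:ℤ)) (N:ℤ),
              (S (j+l) y v - S (j+l-1) y v)))
        else 0‖ ≤
        C * (2:ℝ) ^ ((j':ℝ) * n) / (1 + (2:ℝ) ^ ((j':ℝ)) * ‖x - v‖) ^ ((n:ℝ) + ε) :=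
  tb_product_Pj_poisson_bound_general n ε hε b₁ B hb₁ Ca hCa S hS N
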